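/- arXiv:2602.14903 — 2 statements merged into one kernel-verified Lean document; each statement's English description precedes it below -/
import Mathlib

section
/- Let p₀ and p₁ be probability mass functions on a finite set V, f ∈ (0,1), q(c) = f·p₁(c) + (1−f)·p₀(c), and posterior g(c) = f·p₁(c)/q(c). Then equality ∑_{c} p₁(c)·g(c) = f holds if and only if p₁(c) = q(c) for all c with q(c) > 0; in particular, if p₀ = p₁ then the expected posterior under p₁ equals the prior f. -/
/-! The gap `∑ p₁ g - f` equals `f` times the χ²-divergence `∑ (p₁ - q)² / q` of `p₁` from the
mixture `q`, because `p₁ g = f p₁² / q` and both `p₁` and `q` have total mass one. A χ²-divergence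
vanishes exactly when the two weights agree on the support of `q`. -/

open Finset

section ChiSquare

variable {ι : Type*} (s : Finset ι) {p q : ι → ℝ}

theorem sum_sq_sub_div_eq (hpq : ∀ i ∈ s, q i = 0 → p i = 0) :
    ∑ i ∈ s, (p i - q i) ^ 2 / q i = ∑ i ∈ s, p i ^ 2 / q i - 2 * ∑ i ∈ s, p i + ∑ i ∈ s, q i := by
  rw [mul_sum, ← sum_sub_distrib, ← sum_add_distrib]
  refine sum_congr rfl fun i hi => ?_
  by_cases hqi : q i = 0
  · simp [hqi, hpq i hi hqi]
  · field_simp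
    ring

theorem sum_sq_sub_div_eq_zero_iff (hq : ∀ i ∈ s, 0 ≤ q i) :
    ∑ i ∈ s, (p i - q i) ^ 2 / q i = 0 ↔ ∀ i ∈ s, 0 < q i → p i = q i := by
  rw [sum_eq_zero_iff_of_nonneg fun i hi => div_nonneg (sq_nonneg _) (hq i hi)]
  refine forall₂_congr fun i hi => ?_
  rcases (hq i hi).eq_or_lt with hqi | hqi
  · simp [← hqi]
  · simp [hqi, hqi.ne', sub_eq_zero]

end ChiSquare

/-- Equality case: the expected posterior under `p₁` equals the prior `f` iff
`p₁ c = q c` for all `c` with `q c > 0`; in particular, if `p₀ = p₁` then the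
expected posterior under `p₁` equals `f`. -/
theorem expected_posterior_eq_prior_iff {V : Type*} [Fintype V] (p₀ p₁ : V → ℝ) (f : ℝ)
    (hp₀0 : ∀ c, 0 ≤ p₀ c) (hp₁0 : ∀ c, 0 ≤ p₁ c)
    (hp₀1 : ∑ c, p₀ c = 1) (hp₁1 : ∑ c, p₁ c = 1)
    (hf0 : 0 < f) (hf1 : f < 1)
    (q g : V → ℝ) (hq : ∀ c, q c = f * p₁ c + (1 - f) * p₀ c)
    (hg : ∀ c, g c = f * p₁ c / q c) :
    ((∑ c, p₁ c * g c = f) ↔ (∀ c, 0 < q c → p₁ c = q c)) ∧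
      (p₀ = p₁ → ∑ c, p₁ c * g c = f) := by
  have hp₁q : ∀ c, 0 ≤ f * p₁ c := fun c => mul_nonneg hf0.le (hp₁0 c)
  have hp₀q : ∀ c, 0 ≤ (1 - f) * p₀ c := fun c => mul_nonneg (sub_nonneg.2 hf1.le) (hp₀0 c)
  have hq_nonneg : ∀ c ∈ univ, 0 ≤ q c := fun c _ => hq c ▸ add_nonneg (hp₁q c) (hp₀q c)
  have hp₁_supp : ∀ c ∈ univ, q c = 0 → p₁ c = 0 := fun c _ hc =>
    ((mul_eq_zero.1 ((add_eq_zero_iff_of_nonneg (hp₁q c) (hp₀q c)).1 (hq c ▸ hc)).1).resolve_left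
      hf0.ne')
  have hq_sum : ∑ c, q c = 1 := by
    simp only [hq, sum_add_distrib, ← mul_sum, hp₀1, hp₁1]
    ring
  have hgap : ∑ c, p₁ c * g c - f = f * ∑ c, (p₁ c - q c) ^ 2 / q c := by
    have hterm : ∀ c, p₁ c * g c = f * (p₁ c ^ 2 / q c) := fun c => by rw [hg]; ring
    rw [sum_sq_sub_div_eq univ hp₁_supp, hp₁1, hq_sum, sum_congr rfl fun c _ => hterm c, ← mul_sum]
    ring
  have hiff : ∑ c, p₁ c * g c = f ↔ ∀ c, 0 < q c → p₁ c = q c := by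
    rw [← sub_eq_zero, hgap, mul_eq_zero, or_iff_right hf0.ne',
      sum_sq_sub_div_eq_zero_iff univ hq_nonneg]
    simp only [mem_univ, true_implies]
  refine ⟨hiff, fun h => hiff.2 fun c _ => ?_⟩
  rw [hq, h]
  ring
end

section
/- Let (Ω, 𝓕, P) be a probability space and (𝓕_t)_{t≥0} a filtration. Fix an event A ∈ 𝓕 with P(A) > 0 and set f_t = E[1_A | 𝓕_t]. Then the sequence t ↦ E[f_t | A] is nondecreasing in t, and E[f_t | A] ≥ P(A) for every t. -/
open MeasureTheory Filter NNReal

private lemma integral_mul_condexp_key {Ω : Type*} {m m0 : MeasurableSpace Ω}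
    (hm : m ≤ m0) (μ : Measure Ω) [IsProbabilityMeasure μ] {h g : Ω → ℝ}
    (hh : StronglyMeasurable[m] h) (hb : ∀ᵐ x ∂μ, ‖h x‖ ≤ 1)
    (hg : Integrable g μ) :
    ∫ x, h x * g x ∂μ = ∫ x, h x * (μ[g|m]) x ∂μ := by
  have hhg : Integrable (fun x => h x * g x) μ :=
    hg.bdd_mul (hh.mono hm).aestronglyMeasurable hb
  have h1 : μ[(fun x => h x * g x)|m] =ᵐ[μ] fun x => h x * (μ[g|m]) x :=
    condExp_stronglyMeasurable_mul_of_bound hm hh hg 1 hb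
  calc ∫ x, h x * g x ∂μ = ∫ x, (μ[(fun x => h x * g x)|m]) x ∂μ :=
        (integral_condExp hm).symm
    _ = ∫ x, h x * (μ[g|m]) x ∂μ := integral_congr_ae h1

/-- Filtration version of the monotone potential proposition: with
`f t = E[1_A | 𝓕 t]`, the map `t ↦ E[f t | A]` is nondecreasing and each value
is at least `P A`. -/
theorem potential_monotone_of_filtration {Ω : Type*} {m0 : MeasurableSpace Ω}
    (μ : Measure Ω) [IsProbabilityMeasure μ]
    (ℱ : Filtration ℕ m0)
    (A : Set Ω) (hA : MeasurableSet A) (hA0 : 0 < (μ A).toReal)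
    (f : ℕ → Ω → ℝ)
    (hf : ∀ t, f t = μ[A.indicator (fun _ => (1 : ℝ)) | ℱ t]) :
    Monotone (fun t => (∫ x in A, f t x ∂μ) / (μ A).toReal) ∧
      ∀ t, (μ A).toReal ≤ (∫ x in A, f t x ∂μ) / (μ A).toReal := by
  set g : Ω → ℝ := A.indicator (fun _ => (1 : ℝ)) with hgdef
  have hg_int : Integrable g μ := (integrable_const (1 : ℝ)).indicator hA
  have hmeas : ∀ t, StronglyMeasurable[ℱ t] (f t) := fun t => by
    rw [hf t]; exact stronglyMeasurable_condExp
  have hint : ∀ t, Integrable (f t) μ := fun t => by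
    rw [hf t]; exact integrable_condExp
  have hbd : ∀ t, ∀ᵐ x ∂μ, ‖f t x‖ ≤ 1 := by
    intro t
    have hgb : ∀ᵐ x ∂μ, |g x| ≤ ((1 : ℝ≥0) : ℝ) := by
      refine Eventually.of_forall fun x => ?_
      by_cases hx : x ∈ A <;> simp [hgdef, Set.indicator_apply, hx]
    have := ae_bdd_condExp_of_ae_bdd (m := ℱ t) hgb
    rw [← hf t] at this
    simpa [Real.norm_eq_abs] using this
  -- products are integrable
  have hprod : ∀ s t, Integrable (fun x => f s x * f t x) μ := fun s t =>
    (hint t).bdd_mul ((hmeas s).mono (ℱ.le s)).aestronglyMeasurable (hbd s)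
  set J : ℕ → ℝ := fun t => ∫ x, f t x * f t x ∂μ with hJdef
  -- ∫_A f t = J t
  have hAint : ∀ t, ∫ x in A, f t x ∂μ = J t := by
    intro t
    have h1 : ∫ x in A, f t x ∂μ = ∫ x, f t x * g x ∂μ := by
      rw [← integral_indicator hA]
      refine integral_congr_ae (Eventually.of_forall fun x => ?_)
      by_cases hx : x ∈ A <;> simp [hgdef, Set.indicator_apply, hx]
    rw [h1, integral_mul_condexp_key (ℱ.le t) μ (hmeas t) (hbd t) hg_int]
    refine integral_congr_ae (Eventually.of_forall fun x => ?_)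
    rw [← hf t]
  -- cross term: for s ≤ t, ∫ f s * f t = J s
  have hcross : ∀ s t, s ≤ t → ∫ x, f s x * f t x ∂μ = J s := by
    intro s t hst
    have tower : μ[f t | ℱ s] =ᵐ[μ] f s := by
      rw [hf t, hf s]
      exact condExp_condExp_of_le (ℱ.mono hst) (ℱ.le t)
    rw [integral_mul_condexp_key (ℱ.le s) μ (hmeas s) (hbd s) (hint t)]
    refine integral_congr_ae ?_
    filter_upwards [tower] with x hx
    rw [hx]
  -- monotonicity of J
  have hJmono : Monotone J := by
    intro s t hst
    have hkey : J t - J s = ∫ x, (f t x - f s x) * (f t x - f s x) ∂μ := by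
      have e : (fun x => (f t x - f s x) * (f t x - f s x))
          = fun x => (f t x * f t x - f s x * f t x)
            - (f t x * f s x - f s x * f s x) := by
        funext x; ring
      have i1 : Integrable (fun x => f t x * f t x - f s x * f t x) μ :=
        (hprod t t).sub (hprod s t)
      have i2 : Integrable (fun x => f t x * f s x - f s x * f s x) μ :=
        (hprod t s).sub (hprod s s)
      rw [e, integral_sub i1 i2,
        integral_sub (hprod t t) (hprod s t), integral_sub (hprod t s) (hprod s s)]
      have c1 : ∫ x, f s x * f t x ∂μ = J s := hcross s t hst
      have c2 : ∫ x, f t x * f s x ∂μ = J s := by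
        rw [← c1]
        exact integral_congr_ae (Eventually.of_forall fun x => by ring)
      rw [c1, c2]
      ring
    have hnn : 0 ≤ J t - J s := by
      rw [hkey]
      exact integral_nonneg fun x => mul_self_nonneg _
    linarith
  -- second moment ≥ (mean)^2
  have hmean : ∀ t, ∫ x, f t x ∂μ = (μ A).toReal := by
    intro t
    rw [hf t, integral_condExp (ℱ.le t)]
    rw [show g = A.indicator (fun _ => (1:ℝ)) from rfl, integral_indicator_const _ hA]
    simp [Measure.real]
  have hJlb : ∀ t, (μ A).toReal * (μ A).toReal ≤ J t := by
    intro t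
    set c := (μ A).toReal
    have e : (fun x => (f t x - c) * (f t x - c))
        = fun x => (f t x * f t x - c * f t x) - (c * f t x - c * c) := by
      funext x; ring
    have hcf : Integrable (fun x => c * f t x) μ := (hint t).const_mul c
    have hcc : Integrable (fun _ : Ω => c * c) μ := integrable_const _
    have hnn : (0:ℝ) ≤ ∫ x, (f t x - c) * (f t x - c) ∂μ :=
      integral_nonneg fun x => mul_self_nonneg _
    have i1 : Integrable (fun x => f t x * f t x - c * f t x) μ := (hprod t t).sub hcf
    have i2 : Integrable (fun x => c * f t x - c * c) μ := hcf.sub hcc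
    rw [e, integral_sub i1 i2,
      integral_sub (hprod t t) hcf, integral_sub hcf hcc,
      integral_const_mul, hmean t, integral_const] at hnn
    simp only [measure_univ, probReal_univ, ENNReal.toReal_one, smul_eq_mul, one_mul] at hnn
    linarith
  constructor
  · intro s t hst
    simp only [hAint]
    exact div_le_div_of_nonneg_right (hJmono hst) hA0.le
  · intro t
    rw [hAint t, le_div_iff₀ hA0]
    exact hJlb t
end
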